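/- Under the SAM recursion for a quadratic loss with initialization ‖v_0‖ ≤ R, for any t ≥ ⌈[log(R/b)]₊/(ηλ_d)⌉ with b = ηρλ_1², one has ‖v_t‖ ≤ b. -/
import Mathlib

theorem stmt_8 (d : ℕ) (hd : 0 < d) (lam : Fin d → ℝ) (η ρ R : ℝ)
    (hη : 0 < η) (hρ : 0 < ρ) (hR : 0 < R)
    (hmono : ∀ i j : Fin d, i ≤ j → lam j ≤ lam i)
    (hpos : ∀ i, 0 < lam i)
    (hsmall : ∀ i, η * lam i < 1 / 2)
    (γ : Fin d → ℝ)
    (hγ : ∀ i, γ i = η * ρ * lam i ^ 2 / (1 - η * lam i))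
    (b : ℝ) (hb : b = η * ρ * lam ⟨0, hd⟩ ^ 2)
    (v : ℕ → EuclideanSpace ℝ (Fin d)) (hv : ∀ t, v t ≠ 0)
    (hup : ∀ t i, v (t + 1) i = (1 - η * lam i) * (‖v t‖ - γ i) * v t i / ‖v t‖)
    (hinit : ‖v 0‖ ≤ R) :
    ∀ t : ℕ, max (Real.log (R / b)) 0 / (η * lam ⟨d - 1, by omega⟩) ≤ (t : ℝ) →
      ‖v t‖ ≤ b := by
  have hd1 : d - 1 < d := by omega
  have hb0 : 0 < b := by rw [hb]; have := hpos ⟨0, hd⟩; positivity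
  have hlamd := hpos ⟨d - 1, hd1⟩
  have hetalamd : 0 < η * lam ⟨d - 1, hd1⟩ := mul_pos hη hlamd
  have hc1 : (0:ℝ) ≤ 1 - η * lam ⟨d - 1, hd1⟩ := by have := hsmall ⟨d - 1, hd1⟩; linarith
  -- coordinatewise norm comparison
  have key : ∀ (x y : EuclideanSpace ℝ (Fin d)) (C : ℝ), 0 ≤ C →
      (∀ i, |y i| ≤ C * |x i|) → ‖y‖ ≤ C * ‖x‖ := by
    intro x y C hC h
    rw [EuclideanSpace.norm_eq, EuclideanSpace.norm_eq, ← Real.sqrt_sq hC,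
      ← Real.sqrt_mul (sq_nonneg C)]
    apply Real.sqrt_le_sqrt
    rw [Finset.mul_sum]
    refine Finset.sum_le_sum fun i _ => ?_
    have h1 : ‖y i‖ ≤ C * ‖x i‖ := by simpa [Real.norm_eq_abs] using h i
    calc ‖y i‖ ^ 2 ≤ (C * ‖x i‖) ^ 2 := pow_le_pow_left₀ (norm_nonneg _) h1 2
      _ = C ^ 2 * ‖x i‖ ^ 2 := by ring
  have step : ∀ t, ‖v (t + 1)‖ ≤ max ((1 - η * lam ⟨d - 1, hd1⟩) * ‖v t‖) b := by
    intro t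
    have hs : 0 < ‖v t‖ := norm_pos_iff.mpr (hv t)
    set M := max ((1 - η * lam ⟨d - 1, hd1⟩) * ‖v t‖) b with hMdef
    have hM : 0 < M := lt_max_of_lt_right hb0
    have hcoord : ∀ i, |v (t + 1) i| ≤ (M / ‖v t‖) * |v t i| := by
      intro i
      have h1i : 0 < 1 - η * lam i := by have := hsmall i; linarith
      have hγi : (1 - η * lam i) * γ i = η * ρ * lam i ^ 2 := by
        rw [hγ i]; field_simp
      have hγpos : 0 ≤ γ i := by
        rw [hγ i]; exact div_nonneg (by positivity) h1i.le
      have hnum : (1 - η * lam i) * |‖v t‖ - γ i| ≤ M := by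
        rcases le_or_gt (γ i) ‖v t‖ with h | h
        · rw [abs_of_nonneg (by linarith)]
          have hle : lam ⟨d - 1, hd1⟩ ≤ lam i := by
            apply hmono
            rw [Fin.le_def]
            have := i.2
            simp only
            omega
          refine le_max_of_le_left ?_
          nlinarith [mul_nonneg (mul_nonneg hη.le (sub_nonneg.mpr hle)) hs.le,
            mul_nonneg h1i.le hγpos]
        · rw [abs_of_neg (by linarith), neg_sub]
          refine le_max_of_le_right ?_
          have hle : lam i ≤ lam ⟨0, hd⟩ := by
            apply hmono
            rw [Fin.le_def]
            simp
          have h2 : (1 - η * lam i) * (γ i - ‖v t‖) ≤ (1 - η * lam i) * γ i := by nlinarith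
          rw [hγi] at h2
          have h3 : η * ρ * lam i ^ 2 ≤ b := by
            rw [hb]
            have hsq : lam i ^ 2 ≤ lam ⟨0, hd⟩ ^ 2 :=
              pow_le_pow_left₀ (hpos i).le hle 2
            nlinarith [mul_pos hη hρ]
          linarith
      have habs : |(1 - η * lam i) * (‖v t‖ - γ i)| = (1 - η * lam i) * |‖v t‖ - γ i| := by
        rw [abs_mul, abs_of_pos h1i]
      rw [hup t i, abs_div, abs_mul, abs_of_pos hs, habs]
      calc (1 - η * lam i) * |‖v t‖ - γ i| * |v t i| / ‖v t‖
          ≤ M * |v t i| / ‖v t‖ := by gcongr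
        _ = M / ‖v t‖ * |v t i| := by ring
    have hkey := key (v t) (v (t + 1)) _ (le_of_lt (div_pos hM hs)) hcoord
    rwa [div_mul_cancel₀ _ (ne_of_gt hs)] at hkey
  have bound : ∀ t, ‖v t‖ ≤ max ((1 - η * lam ⟨d - 1, hd1⟩) ^ t * R) b := by
    intro t
    induction t with
    | zero => exact le_max_of_le_left (by simpa using hinit)
    | succ t ih =>
      refine (step t).trans (max_le ?_ (le_max_right _ _))
      calc (1 - η * lam ⟨d - 1, hd1⟩) * ‖v t‖
          ≤ (1 - η * lam ⟨d - 1, hd1⟩) * max ((1 - η * lam ⟨d - 1, hd1⟩) ^ t * R) b :=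
            mul_le_mul_of_nonneg_left ih hc1
        _ = max ((1 - η * lam ⟨d - 1, hd1⟩) ^ (t + 1) * R)
              ((1 - η * lam ⟨d - 1, hd1⟩) * b) := by
            rw [mul_max_of_nonneg _ _ hc1]; ring_nf
        _ ≤ max ((1 - η * lam ⟨d - 1, hd1⟩) ^ (t + 1) * R) b := by
            apply max_le_max le_rfl
            nlinarith
  intro t ht
  have ht' : max (Real.log (R / b)) 0 / (η * lam ⟨d - 1, hd1⟩) ≤ (t : ℝ) := ht
  refine (bound t).trans (max_le ?_ le_rfl)
  rcases le_or_gt R b with h | h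
  · have hp1 : (1 - η * lam ⟨d - 1, hd1⟩) ^ t ≤ 1 := pow_le_one₀ hc1 (by linarith)
    nlinarith
  · have hlogpos : 0 < Real.log (R / b) := Real.log_pos (by rw [lt_div_iff₀ hb0]; linarith)
    rw [max_eq_left hlogpos.le, div_le_iff₀ hetalamd] at ht'
    have h1 : (1 - η * lam ⟨d - 1, hd1⟩) ^ t ≤ Real.exp (-(η * lam ⟨d - 1, hd1⟩)) ^ t :=
      pow_le_pow_left₀ hc1 (by have := Real.add_one_le_exp (-(η * lam ⟨d - 1, hd1⟩)); linarith) t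
    have h2 : Real.exp (-(η * lam ⟨d - 1, hd1⟩)) ^ t
        = Real.exp (-((t : ℝ) * (η * lam ⟨d - 1, hd1⟩))) := by
      rw [← Real.exp_nat_mul]; ring_nf
    have h3 : Real.exp (-((t : ℝ) * (η * lam ⟨d - 1, hd1⟩))) ≤ Real.exp (-Real.log (R / b)) :=
      Real.exp_le_exp.mpr (by linarith)
    have h4 : Real.exp (-Real.log (R / b)) = b / R := by
      rw [Real.exp_neg, Real.exp_log (by positivity), inv_div]
    have h5 : (1 - η * lam ⟨d - 1, hd1⟩) ^ t ≤ b / R := by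
      rw [← h4]; exact h1.trans (h2 ▸ h3)
    have h6 := mul_le_mul_of_nonneg_right h5 hR.le
    rw [div_mul_cancel₀ b (ne_of_gt hR)] at h6
    exact h6
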